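/- Let A be a unital C*-algebra and H a finite-dimensional complex Hilbert space. Then every C*-extreme point of CCP(A,B(H)) is a linear extreme point of CCP(A,B(H)). -/

import Mathlib

open scoped ComplexOrder

noncomputable section

section Defs

variable {A H : Type*}
variable [NormedAddCommGroup H] [InnerProductSpace ℂ H]

/-- An operator on a complex inner product space is positive:
`0 ≤ ⟪x, T x⟫` for all `x`. -/
def IsPosOp (T : H →L[ℂ] H) : Prop := ∀ x : H, 0 ≤ (inner ℂ x (T x) : ℂ)

variable [Ring A] [StarRing A] [Algebra ℂ A]

/-- Complete positivity of a linear map `Φ : A → B(H)`: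
`∑_{i,j} ⟪h i, Φ(a i* a j) (h j)⟫ ≥ 0` for all finite families. -/
def IsCPMap (Φ : A →ₗ[ℂ] (H →L[ℂ] H)) : Prop :=
  ∀ (n : ℕ) (a : Fin n → A) (h : Fin n → H),
    0 ≤ ∑ i, ∑ j, (inner ℂ (h i) ((Φ (star (a i) * a j)) (h j)) : ℂ)

/-- `CP^{(P)}(A, B(H))`: the CP maps `Φ` with `Φ 1 = P`. -/
def CPP (P : H →L[ℂ] H) : Set (A →ₗ[ℂ] (H →L[ℂ] H)) := {Φ | IsCPMap Φ ∧ Φ 1 = P}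

/-- `CCP(A, B(H))`: the contractive CP maps, i.e. CP maps with `Φ 1 ≤ 1`. -/
def CCPmaps : Set (A →ₗ[ℂ] (H →L[ℂ] H)) := {Φ | IsCPMap Φ ∧ IsPosOp (1 - Φ 1)}

variable [CompleteSpace H]

/-- `Ad_T : X ↦ T* X T`, as a linear map on `B(H)`. -/
def conjAd (T : H →L[ℂ] H) : (H →L[ℂ] H) →ₗ[ℂ] (H →L[ℂ] H) where
  toFun X := star T * X * T
  map_add' X Y := by simp [add_mul, mul_add]
  map_smul' c X := by simp [mul_smul_comm, smul_mul_assoc]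

/-- `Φ ∈ CP^{(P)}` is a `P`-`C*`-extreme point of `CP^{(P)}(A, B(H))`:
whenever `Φ = ∑ Ad_{T j} ∘ Φs j` is a proper `P`-`C*`-convex combination of members of
`CP^{(P)}`, each `Φs j` equals `Ad_{S j} ∘ Φ` for some invertible `S j`. -/
def IsPCExtreme (P : H →L[ℂ] H) (Φ : A →ₗ[ℂ] (H →L[ℂ] H)) : Prop :=
  Φ ∈ CPP (A := A) P ∧
  ∀ (n : ℕ) (T : Fin n → (H →L[ℂ] H)) (Φs : Fin n → (A →ₗ[ℂ] (H →L[ℂ] H))),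
    (∀ j, IsUnit (T j)) → (∀ j, Φs j ∈ CPP (A := A) P) →
    (∑ j, star (T j) * P * T j) = P →
    Φ = ∑ j, (conjAd (T j)).comp (Φs j) →
    ∀ j, ∃ S : H →L[ℂ] H, IsUnit S ∧ Φs j = (conjAd S).comp Φ

/-- `Φ ∈ C` is a `C*`-extreme point of the `C*`-convex set `C`:
whenever `Φ = ∑ Ad_{T j} ∘ Φs j` is a proper `C*`-convex combination of members of `C`,
each `Φs j` is unitarily equivalent to `Φ`. -/
def IsCstarExtreme (C : Set (A →ₗ[ℂ] (H →L[ℂ] H))) (Φ : A →ₗ[ℂ] (H →L[ℂ] H)) : Prop :=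
  Φ ∈ C ∧
  ∀ (n : ℕ) (T : Fin n → (H →L[ℂ] H)) (Φs : Fin n → (A →ₗ[ℂ] (H →L[ℂ] H))),
    (∀ j, IsUnit (T j)) → (∀ j, Φs j ∈ C) →
    (∑ j, star (T j) * T j) = 1 →
    Φ = ∑ j, (conjAd (T j)).comp (Φs j) →
    ∀ j, ∃ U : H →L[ℂ] H, U ∈ unitary (H →L[ℂ] H) ∧ Φs j = (conjAd U).comp Φ

/-- `Φ ∈ C` is a linear extreme point of the convex set `C`. -/
def IsLinExtreme (C : Set (A →ₗ[ℂ] (H →L[ℂ] H))) (Φ : A →ₗ[ℂ] (H →L[ℂ] H)) : Prop :=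
  Φ ∈ C ∧
  ∀ (n : ℕ) (t : Fin n → ℝ) (Φs : Fin n → (A →ₗ[ℂ] (H →L[ℂ] H))),
    (∀ j, 0 < t j ∧ t j < 1) → (∀ j, Φs j ∈ C) → (∑ j, t j) = 1 →
    Φ = ∑ j, (t j : ℂ) • Φs j →
    ∀ j, Φs j = Φ

end Defs

/-!
Write `Φ = ∑ tⱼ Φⱼ` as the `C*`-convex combination `∑ Ad_{Tⱼ} ∘ Φⱼ` with `Tⱼ = √tⱼ • 1`.
`C*`-extremality yields unitaries `Uⱼ` with `Φⱼ = Ad_{Uⱼ} ∘ Φ`, so every `Φ a` is a convex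
combination of its unitary conjugates `Uⱼ* (Φ a) Uⱼ`. These all have the Hilbert–Schmidt norm of
`Φ a`, and in finite dimension the Hilbert–Schmidt norm is a Euclidean norm, so strict convexity
of the ball forces `Uⱼ* (Φ a) Uⱼ = Φ a`.
-/

open scoped InnerProductSpace

section Convexity

variable {𝕜 E ι : Type*} [RCLike 𝕜] [NormedAddCommGroup E] [InnerProductSpace 𝕜 E] [Fintype ι]

lemma sum_mul_norm_sub_sq_eq {t : ι → ℝ} (ht : ∑ j, t j = 1) {y : ι → E} {x : E}
    (hx : ∑ j, (t j : 𝕜) • y j = x) :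
    ∑ j, t j * ‖y j - x‖ ^ 2 = ∑ j, t j * ‖y j‖ ^ 2 - ‖x‖ ^ 2 := by
  have hcross : ∑ j, t j * RCLike.re ⟪y j, x⟫_𝕜 = ‖x‖ ^ 2 := calc
    _ = RCLike.re ⟪∑ j, (t j : 𝕜) • y j, x⟫_𝕜 := by simp [sum_inner, inner_smul_left]
    _ = ‖x‖ ^ 2 := by rw [hx, inner_self_eq_norm_sq]
  calc ∑ j, t j * ‖y j - x‖ ^ 2
      = ∑ j, (t j * ‖y j‖ ^ 2 - 2 * (t j * RCLike.re ⟪y j, x⟫_𝕜) + t j * ‖x‖ ^ 2) := by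
        congr! 1 with j; rw [norm_sub_sq (𝕜 := 𝕜)]; ring
    _ = ∑ j, t j * ‖y j‖ ^ 2 - ‖x‖ ^ 2 := by
        rw [Finset.sum_add_distrib, Finset.sum_sub_distrib, ← Finset.mul_sum, hcross,
          ← Finset.sum_mul, ht]
        ring

lemma eq_of_sum_smul_eq_of_norm_le {t : ι → ℝ} (ht_pos : ∀ j, 0 < t j) (ht : ∑ j, t j = 1)
    {y : ι → E} {x : E} (hx : ∑ j, (t j : 𝕜) • y j = x) (hy : ∀ j, ‖y j‖ ≤ ‖x‖) (j : ι) :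
    y j = x := by
  have hle : ∑ j, t j * ‖y j - x‖ ^ 2 ≤ 0 := calc
    _ = ∑ j, t j * ‖y j‖ ^ 2 - ‖x‖ ^ 2 := sum_mul_norm_sub_sq_eq ht hx
    _ ≤ ∑ j, t j * ‖x‖ ^ 2 - ‖x‖ ^ 2 := by
        gcongr with k
        · exact (ht_pos k).le
        · exact hy k
    _ = 0 := by rw [← Finset.sum_mul, ht, one_mul, sub_self]
  have hnonneg : ∀ k ∈ Finset.univ, 0 ≤ t k * ‖y k - x‖ ^ 2 :=
    fun k _ => mul_nonneg (ht_pos k).le (sq_nonneg _)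
  have hterm := (Finset.sum_eq_zero_iff_of_nonneg hnonneg).mp
    (hle.antisymm (Finset.sum_nonneg hnonneg)) j (Finset.mem_univ j)
  simpa [(ht_pos j).ne', sub_eq_zero] using hterm

end Convexity

section HilbertSchmidt

variable {𝕜 E ι ι' : Type*} [RCLike 𝕜] [NormedAddCommGroup E] [InnerProductSpace 𝕜 E]
  [Fintype ι] [Fintype ι']

lemma OrthonormalBasis.sum_norm_sq_apply_eq_re_trace [CompleteSpace E]
    (b : OrthonormalBasis ι 𝕜 E) (T : E →L[𝕜] E) :
    ∑ i, ‖T (b i)‖ ^ 2 =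
      RCLike.re (LinearMap.trace 𝕜 E (ContinuousLinearMap.adjoint T * T : E →L[𝕜] E)) := by
  rw [LinearMap.trace_eq_sum_inner _ b, map_sum]
  congr! 1 with i
  simp [ContinuousLinearMap.adjoint_inner_right]

lemma OrthonormalBasis.sum_norm_sq_apply_eq [CompleteSpace E] (b : OrthonormalBasis ι 𝕜 E)
    (b' : OrthonormalBasis ι' 𝕜 E) (T : E →L[𝕜] E) :
    ∑ i, ‖T (b i)‖ ^ 2 = ∑ i, ‖T (b' i)‖ ^ 2 := by
  rw [b.sum_norm_sq_apply_eq_re_trace, b'.sum_norm_sq_apply_eq_re_trace]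

def hilbertSchmidtEmbedding (b : OrthonormalBasis ι 𝕜 E) :
    (E →L[𝕜] E) →ₗ[𝕜] PiLp 2 (fun _ : ι => E) where
  toFun T := WithLp.toLp 2 fun i => T (b i)
  map_add' _ _ := rfl
  map_smul' _ _ := rfl

lemma norm_hilbertSchmidtEmbedding_sq (b : OrthonormalBasis ι 𝕜 E) (T : E →L[𝕜] E) :
    ‖hilbertSchmidtEmbedding b T‖ ^ 2 = ∑ i, ‖T (b i)‖ ^ 2 :=
  PiLp.norm_sq_eq_of_L2 _ _

lemma hilbertSchmidtEmbedding_injective (b : OrthonormalBasis ι 𝕜 E) :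
    Function.Injective (hilbertSchmidtEmbedding b) := by
  intro S T h
  apply ContinuousLinearMap.coe_injective
  exact b.toBasis.ext fun i => congr_fun (congrArg WithLp.ofLp h) i

lemma norm_hilbertSchmidtEmbedding_conj_unitary [CompleteSpace E] (b : OrthonormalBasis ι 𝕜 E)
    {U : E →L[𝕜] E} (hU : U ∈ unitary (E →L[𝕜] E)) (X : E →L[𝕜] E) :
    ‖hilbertSchmidtEmbedding b (star U * X * U)‖ = ‖hilbertSchmidtEmbedding b X‖ := by
  refine (sq_eq_sq₀ (norm_nonneg _) (norm_nonneg _)).mp ?_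
  -- `star U` acts isometrically, and `X * U` read in `b` is `X` read in the basis `U b`.
  let b' := b.map (Unitary.linearIsometryEquiv ⟨U, hU⟩)
  calc ‖hilbertSchmidtEmbedding b (star U * X * U)‖ ^ 2
      = ∑ i, ‖X (b' i)‖ ^ 2 := by
        rw [norm_hilbertSchmidtEmbedding_sq]
        congr! 2 with i
        exact (star U).norm_map_of_mem_unitary (Unitary.star_mem hU) _
    _ = ‖hilbertSchmidtEmbedding b X‖ ^ 2 := by
        rw [norm_hilbertSchmidtEmbedding_sq, b'.sum_norm_sq_apply_eq b]

theorem conj_unitary_eq_of_sum_smul_conj_unitary_eq [CompleteSpace E] [FiniteDimensional 𝕜 E]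
    {t : ι → ℝ} (ht_pos : ∀ j, 0 < t j) (ht : ∑ j, t j = 1) {U : ι → E →L[𝕜] E}
    (hU : ∀ j, U j ∈ unitary (E →L[𝕜] E)) {X : E →L[𝕜] E}
    (hX : ∑ j, (t j : 𝕜) • (star (U j) * X * U j) = X) (j : ι) :
    star (U j) * X * U j = X := by
  let b := stdOrthonormalBasis 𝕜 E
  refine hilbertSchmidtEmbedding_injective b <|
    eq_of_sum_smul_eq_of_norm_le (𝕜 := 𝕜) ht_pos ht ?_
      (fun k => (norm_hilbertSchmidtEmbedding_conj_unitary b (hU k) X).le) j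
  simp only [← map_smul, ← map_sum, hX]

end HilbertSchmidt

section ScalarConjugation

variable {H : Type*} [NormedAddCommGroup H] [InnerProductSpace ℂ H] [CompleteSpace H]

lemma conjAd_apply (T X : H →L[ℂ] H) : conjAd T X = star T * X * T := rfl

lemma conjAd_sqrt_smul_one {t : ℝ} (ht : 0 ≤ t) (X : H →L[ℂ] H) :
    conjAd (((√t : ℝ) : ℂ) • 1) X = (t : ℂ) • X := by
  simp only [conjAd_apply, star_smul, star_one, Complex.star_def,
    Complex.conj_ofReal, smul_mul_assoc, one_mul, mul_smul_comm, mul_one, smul_smul,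
    ← Complex.ofReal_mul, Real.mul_self_sqrt ht]

lemma isUnit_sqrt_smul_one {B : Type*} [Ring B] [Algebra ℂ B] {t : ℝ} (ht : 0 < t) :
    IsUnit (((√t : ℝ) : ℂ) • (1 : B)) := by
  rw [← Algebra.algebraMap_eq_smul_one]
  exact (IsUnit.mk0 _ (by simpa using (Real.sqrt_pos.mpr ht).ne')).map _

end ScalarConjugation

theorem stmt19_general {A : Type*} [NormedRing A] [StarRing A] [NormedAlgebra ℂ A]
    {H : Type*} [NormedAddCommGroup H] [InnerProductSpace ℂ H] [CompleteSpace H] [FiniteDimensional ℂ H] :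
    ∀ Φ : A →ₗ[ℂ] (H →L[ℂ] H),
      IsCstarExtreme (CCPmaps (A := A) (H := H)) Φ →
      IsLinExtreme (CCPmaps (A := A) (H := H)) Φ := by
  rintro Φ ⟨hΦ, hCext⟩
  refine ⟨hΦ, fun n t Φs ht hΦs hsum hconv => ?_⟩
  let T : Fin n → H →L[ℂ] H := fun j => ((√(t j) : ℝ) : ℂ) • 1
  have hT (j : Fin n) (X : H →L[ℂ] H) : conjAd (T j) X = (t j : ℂ) • X :=
    conjAd_sqrt_smul_one (ht j).1.le X
  have hsumT : ∑ j, star (T j) * T j = 1 := calc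
    _ = ∑ j, (t j : ℂ) • (1 : H →L[ℂ] H) := by simp_rw [← hT, conjAd_apply, mul_one]
    _ = 1 := by rw [← Finset.sum_smul, ← Complex.ofReal_sum, hsum, Complex.ofReal_one, one_smul]
  have hconvT : Φ = ∑ j, (conjAd (T j)).comp (Φs j) := by
    ext1 a
    simp [hT, hconv]
  choose U hU hΦU using hCext n T Φs (fun j => isUnit_sqrt_smul_one (ht j).1) hΦs hsumT hconvT
  intro j
  ext1 a
  have hX : ∑ k, (t k : ℂ) • (star (U k) * Φ a * U k) = Φ a := by
    conv_rhs => rw [hconv]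
    simp [hΦU, conjAd_apply]
  rw [hΦU j]
  exact conj_unitary_eq_of_sum_smul_conj_unitary_eq (fun k => (ht k).1) hsum hU hX j

/-- Corollary `rmk-CCP-Cstar-linear-ext`. If `H` is finite-dimensional, then
every `C*`-extreme point of `CCP(A,B(H))` is a linear extreme point of `CCP(A,B(H))`. -/
theorem stmt19 {A : Type*} [NormedRing A] [StarRing A] [CStarRing A] [NormedAlgebra ℂ A] [StarModule ℂ A] [CompleteSpace A]
    {H : Type*} [NormedAddCommGroup H] [InnerProductSpace ℂ H] [CompleteSpace H] [FiniteDimensional ℂ H] :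
    ∀ Φ : A →ₗ[ℂ] (H →L[ℂ] H),
      IsCstarExtreme (CCPmaps (A := A) (H := H)) Φ →
      IsLinExtreme (CCPmaps (A := A) (H := H)) Φ :=
  stmt19_general

end
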